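/- Let α ∈ (0,1), m > 0 with K := 2·m^{1−1/α}, let d, d_w > 0, d_J > 1, L > 1, and let c_1, c_2, c_3, c_4, c_6, C_η, A_1, A_2, A_3, A_4 > 0 be constants. For c > 0, t > 0, ρ > 0 and measurable η : (0,∞) → [0,∞), set Φ_c(t,ρ) := e^{mt}·∫_0^∞ f_c(s,ρ)·e^{−m^{1/α} s}·η(s) ds, and set R(t,ρ;A) := t^{−d/d_w}·exp(−A·min(ρ^{d_w/d_J}, (ρ·t^{−1/d_w})^{d_w/(d_J−1)})). Then there exist a nonnegative integer M_0 and constants C_3, C_4, C_5, C_6 > 0 depending only on the listed constants such that: for every integer M ≥ M_0, every t with 1 ≤ t < L^{M d_w}, every r ∈ (0, L^M], and all measurable η, G : (0,∞) → [0,∞) satisfying (i) η(u) ≤ C_η·t·u^{−1−α} for all u > 0; (ii) c_1·f_{c_2}(s,r) ≤ G(s) for all s > 0, G(s) ≤ c_3·f_{c_4}(s,r) for 0 < s < K·L^{M d_w}, and G(s) ≤ c_6·L^{−Md} for s ≥ K·L^{M d_w}; (iii) A_1·R(t,r;A_2) ≤ Φ_{c_2}(t,r) and Φ_{c_4}(t,r)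 ≤ A_3·R(t,r;A_4); one has C_3·R(t,r;C_4) ≤ e^{mt}·∫_0^∞ G(s)·e^{−m^{1/α} s}·η(s) ds ≤ C_5·R(t,r;C_6). -/

import Mathlib

open MeasureTheory Set

/-- The subgaussian profile `f_c(t,r) = t^{-d/d_w} exp(-c (r / t^{1/d_w})^{d_w/(d_J-1)})`. -/
noncomputable def fprof (d dw dJ c t r : ℝ) : ℝ :=
  t ^ (-(d / dw)) * Real.exp (-c * (r / t ^ (1 / dw)) ^ (dw / (dJ - 1)))

/-- The large-time relativistic profile
`R(t,ρ;A) = t^{-d/d_w} exp(-A min(ρ^{d_w/d_J}, (ρ t^{-1/d_w})^{d_w/(d_J-1)}))`. -/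
noncomputable def Rprof (d dw dJ A t ρ : ℝ) : ℝ :=
  t ^ (-(d / dw)) *
    Real.exp (-A * min (ρ ^ (dw / dJ)) ((ρ * t ^ (-(1 / dw))) ^ (dw / (dJ - 1))))

/-- The relativistic subordination of the subgaussian profile:
`Φ_c(t,ρ) = e^{mt} ∫_0^∞ f_c(s,ρ) e^{-m^{1/α} s} η(s) ds`. -/
noncomputable def Phi (d dw dJ α m : ℝ) (η : ℝ → ℝ) (c t ρ : ℝ) : ℝ :=
  Real.exp (m * t) *
    ∫ s in Ioi (0 : ℝ), fprof d dw dJ c s ρ * Real.exp (-(m ^ (1 / α)) * s) * η s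

/-!
The lower bound is immediate from `c₁ f_{c₂} ≤ G`. For the upper bound, split the `s`-integral
at `T = K L^{M d_w}`, where `m^{1/α} T = 2 m L^{M d_w}`. Below `T`, `G ≤ c₃ f_{c₄}` gives
`c₃ Φ_{c₄}`. Above `T`, `G ≤ c₆ L^{-Md} ≤ c₆ t^{-d/d_w}` and `η ≤ C_η t K^{-1-α}`, so the tail
is at most a constant times `t^{-d/d_w} · t e^{mt - 2m L^{M d_w}}`; as `t` and `r^{d_w/d_J}` are
at most `L^{M d_w}`, this is dominated by `R(t, r; m/2)`. The integrands are integrable because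
`x^p e^{-x} ≤ p^p` bounds `f_c(s, r) s^{-1-α}` uniformly in `s`.
-/

open Real

lemma rpow_mul_exp_neg_le {x p : ℝ} (hx : 0 ≤ x) (hp : 0 < p) :
    x ^ p * exp (-x) ≤ p ^ p := by
  have hxp : x / p ≤ exp (x / p) := by linarith [add_one_le_exp (x / p)]
  calc x ^ p * exp (-x) = p ^ p * (x / p) ^ p * exp (-x) := by
        rw [div_rpow hx hp.le, mul_div_cancel₀ _ (rpow_pos_of_pos hp p).ne']
    _ ≤ p ^ p * exp (x / p) ^ p * exp (-x) := by gcongr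
    _ = p ^ p := by
        rw [← exp_mul, div_mul_cancel₀ _ hp.ne', mul_assoc, ← exp_add, add_neg_cancel, exp_zero,
          mul_one]

lemma exists_fprof_mul_rpow_le {d dw dJ c r q : ℝ} (hdw : 0 < dw) (hdJ : 1 < dJ) (hc : 0 < c)
    (hr : 0 < r) (hq : q < d / dw) :
    ∃ B, ∀ s, 0 < s → fprof d dw dJ c s r * s ^ q ≤ B := by
  set β := dw / (dJ - 1)
  have hβ : 0 < β := div_pos hdw (by linarith)
  set p := (d / dw - q) * dw / β
  have hp : 0 < p := by have := sub_pos.2 hq; positivity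
  have hcr : 0 < c * r ^ β := by positivity
  refine ⟨(c * r ^ β) ^ (-p) * p ^ p, fun s hs => ?_⟩
  set x := c * (r / s ^ (1 / dw)) ^ β
  have hx : x = c * r ^ β * s ^ (-(β / dw)) := by
    simp only [x]
    rw [div_rpow hr.le (by positivity), ← rpow_mul hs.le, rpow_neg hs.le]
    ring_nf
  have hpow : s ^ (q - d / dw) = (c * r ^ β) ^ (-p) * x ^ p := by
    rw [hx, mul_rpow hcr.le (by positivity), ← rpow_mul hs.le, rpow_neg hcr.le,
      inv_mul_cancel_left₀ (rpow_pos_of_pos hcr p).ne']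
    congr 1
    simp only [p]
    field_simp
    ring
  calc fprof d dw dJ c s r * s ^ q = (c * r ^ β) ^ (-p) * (x ^ p * exp (-x)) := by
        rw [fprof, mul_right_comm, ← rpow_add hs, neg_add_eq_sub, hpow, neg_mul]; ring
    _ ≤ _ := by gcongr; exact rpow_mul_exp_neg_le (by positivity) hp

lemma fprof_nonneg {d dw dJ c s r : ℝ} (hs : 0 ≤ s) : 0 ≤ fprof d dw dJ c s r := by
  unfold fprof; positivity

lemma measurable_fprof (d dw dJ c r : ℝ) : Measurable fun s => fprof d dw dJ c s r := by
  unfold fprof; fun_prop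

lemma integrableOn_fprof_mul_exp_mul {d dw dJ c r q C k : ℝ} {η : ℝ → ℝ} (hdw : 0 < dw)
    (hdJ : 1 < dJ) (hc : 0 < c) (hr : 0 < r) (hq : q < d / dw) (hk : 0 < k) (hη : Measurable η)
    (hη0 : ∀ u, 0 < u → 0 ≤ η u) (hηC : ∀ u, 0 < u → η u ≤ C * u ^ q) :
    IntegrableOn (fun s => fprof d dw dJ c s r * exp (-k * s) * η s) (Ioi 0) := by
  obtain ⟨B, hB⟩ := exists_fprof_mul_rpow_le hdw hdJ hc hr hq
  have hC : 0 ≤ C := by simpa using (hη0 1 one_pos).trans (hηC 1 one_pos)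
  refine ((exp_neg_integrableOn_Ioi 0 hk).const_mul (C * B)).mono'
    (((measurable_fprof d dw dJ c r).mul (by fun_prop)).mul hη).aestronglyMeasurable
    (ae_restrict_of_forall_mem measurableSet_Ioi fun s (hs : 0 < s) => ?_)
  have hf0 : 0 ≤ fprof d dw dJ c s r := fprof_nonneg hs.le
  rw [Real.norm_of_nonneg (by have := hη0 s hs; positivity)]
  calc fprof d dw dJ c s r * exp (-k * s) * η s
      ≤ fprof d dw dJ c s r * exp (-k * s) * (C * s ^ q) := by gcongr; exact hηC s hs
    _ = C * (fprof d dw dJ c s r * s ^ q) * exp (-k * s) := by ring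
    _ ≤ C * B * exp (-k * s) := by gcongr; exact hB s hs

section WeightedIntegral

variable {F G η : ℝ → ℝ} {c T k B : ℝ}

lemma mul_exp_mul_le_of_mul_le {s : ℝ} (h : G s * η s ≤ B) :
    G s * exp (-k * s) * η s ≤ B * exp (-k * s) := by
  rw [mul_right_comm]
  exact mul_le_mul_of_nonneg_right h (exp_pos _).le

lemma mul_exp_mul_le_of_le {s : ℝ} (hη : 0 ≤ η s) (h : G s ≤ c * F s) :
    G s * exp (-k * s) * η s ≤ c * (F s * exp (-k * s) * η s) :=
  calc _ ≤ c * F s * exp (-k * s) * η s := by gcongr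
    _ = _ := by ring

lemma integrableOn_mul_exp_mul_of_le (hk : 0 < k) (hG : Measurable G) (hη : Measurable η)
    (hG0 : ∀ s, 0 < s → 0 ≤ G s) (hη0 : ∀ s, 0 < s → 0 ≤ η s)
    (hF : IntegrableOn (fun s => F s * exp (-k * s) * η s) (Ioi 0))
    (hGF : ∀ s, 0 < s → s < T → G s ≤ c * F s) (hGη : ∀ s, T ≤ s → G s * η s ≤ B) :
    IntegrableOn (fun s => G s * exp (-k * s) * η s) (Ioi 0) := by
  refine ((hF.const_mul c).sup ((exp_neg_integrableOn_Ioi 0 hk).const_mul B)).mono'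
    ((hG.mul (by fun_prop)).mul hη).aestronglyMeasurable
    (ae_restrict_of_forall_mem measurableSet_Ioi fun s (hs : 0 < s) => ?_)
  rw [Real.norm_of_nonneg (by have := hG0 s hs; have := hη0 s hs; positivity)]
  rcases lt_or_ge s T with hsT | hsT
  · exact (mul_exp_mul_le_of_le (hη0 s hs) (hGF s hs hsT)).trans le_sup_left
  · exact (mul_exp_mul_le_of_mul_le (hGη s hsT)).trans le_sup_right

lemma setIntegral_mul_exp_mul_le (hc : 0 ≤ c) (hT : 0 < T) (hk : 0 < k) (hG : Measurable G)
    (hη : Measurable η) (hG0 : ∀ s, 0 < s → 0 ≤ G s) (hη0 : ∀ s, 0 < s → 0 ≤ η s)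
    (hF : IntegrableOn (fun s => F s * exp (-k * s) * η s) (Ioi 0)) (hF0 : ∀ s, 0 < s → 0 ≤ F s)
    (hGF : ∀ s, 0 < s → s < T → G s ≤ c * F s) (hGη : ∀ s, T ≤ s → G s * η s ≤ B) :
    ∫ s in Ioi 0, G s * exp (-k * s) * η s ≤
      c * (∫ s in Ioi 0, F s * exp (-k * s) * η s) + B * (exp (-k * T) / k) := by
  have hGi := integrableOn_mul_exp_mul_of_le hk hG hη hG0 hη0 hF hGF hGη
  have hcF : IntegrableOn (fun s => c * (F s * exp (-k * s) * η s)) (Ioi 0) := hF.const_mul c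
  have hsplit : ∫ s in Ioi 0, G s * exp (-k * s) * η s =
      (∫ s in Ioo 0 T, G s * exp (-k * s) * η s) + ∫ s in Ici T, G s * exp (-k * s) * η s := by
    rw [← Ioo_union_Ici_eq_Ioi hT]
    exact setIntegral_union ((Iio_disjoint_Ici le_rfl).mono_left Ioo_subset_Iio_self)
      measurableSet_Ici (hGi.mono_set Ioo_subset_Ioi_self) (hGi.mono_set (Ici_subset_Ioi.2 hT))
  rw [hsplit, ← integral_const_mul]
  gcongr
  · calc ∫ s in Ioo 0 T, G s * exp (-k * s) * η s
        ≤ ∫ s in Ioo 0 T, c * (F s * exp (-k * s) * η s) :=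
          setIntegral_mono_on (hGi.mono_set Ioo_subset_Ioi_self)
            (hcF.mono_set Ioo_subset_Ioi_self) measurableSet_Ioo
            fun s hs => mul_exp_mul_le_of_le (hη0 s hs.1) (hGF s hs.1 hs.2)
      _ ≤ ∫ s in Ioi 0, c * (F s * exp (-k * s) * η s) :=
          setIntegral_mono_set hcF
            (ae_restrict_of_forall_mem measurableSet_Ioi fun s (hs : 0 < s) => by
              have := hF0 s hs; have := hη0 s hs; positivity)
            Ioo_subset_Ioi_self.eventuallyLE
  · calc ∫ s in Ici T, G s * exp (-k * s) * η s
        ≤ ∫ s in Ioi T, B * exp (-k * s) := by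
          rw [integral_Ici_eq_integral_Ioi]
          exact setIntegral_mono_on (hGi.mono_set (Ioi_subset_Ioi hT.le))
            ((exp_neg_integrableOn_Ioi T hk).const_mul B) measurableSet_Ioi
            fun s hs => mul_exp_mul_le_of_mul_le (hGη s (le_of_lt hs))
      _ = B * (exp (-k * T) / k) := by
        rw [integral_const_mul, integral_exp_mul_Ioi (neg_lt_zero.2 hk), neg_div_neg_eq]

end WeightedIntegral

lemma mul_Phi_le_of_mul_fprof_le {d dw dJ α m c c' t r : ℝ} {η G : ℝ → ℝ} (hc : 0 ≤ c)
    (hη0 : ∀ u, 0 < u → 0 ≤ η u)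
    (hGi : IntegrableOn (fun s => G s * exp (-(m ^ (1 / α)) * s) * η s) (Ioi 0))
    (hGF : ∀ s, 0 < s → c * fprof d dw dJ c' s r ≤ G s) :
    c * Phi d dw dJ α m η c' t r ≤
      exp (m * t) * ∫ s in Ioi 0, G s * exp (-(m ^ (1 / α)) * s) * η s := by
  rw [Phi, mul_left_comm, ← integral_const_mul]
  refine mul_le_mul_of_nonneg_left (integral_mono_of_nonneg
    (ae_restrict_of_forall_mem measurableSet_Ioi fun s (hs : 0 < s) => ?_) hGi
    (ae_restrict_of_forall_mem measurableSet_Ioi fun s (hs : 0 < s) => ?_)) (exp_pos _).le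
  · have := hη0 s hs
    have := fprof_nonneg (d := d) (dw := dw) (dJ := dJ) (c := c') (r := r) hs.le
    positivity
  · have := hη0 s hs
    calc _ = c * fprof d dw dJ c' s r * exp (-(m ^ (1 / α)) * s) * η s := by ring
      _ ≤ G s * exp (-(m ^ (1 / α)) * s) * η s := by gcongr; exact hGF s hs

lemma Rprof_anti {d dw dJ A A' t r : ℝ} (ht : 0 ≤ t) (hr : 0 ≤ r) (hA : A ≤ A') :
    Rprof d dw dJ A' t r ≤ Rprof d dw dJ A t r := by
  unfold Rprof
  have : 0 ≤ min (r ^ (dw / dJ)) ((r * t ^ (-(1 / dw))) ^ (dw / (dJ - 1))) := by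
    positivity
  gcongr

lemma rpow_neg_mul_exp_le_Rprof {d dw dJ m t r X : ℝ} (hm : 0 < m) (hd : 0 ≤ d) (hdw : 0 < dw)
    (ht : 0 < t) (htX : t ≤ X) (hrX : r ^ (dw / dJ) ≤ X) :
    X ^ (-(d / dw)) * (t * exp (m * t - 2 * m * X)) ≤ 2 / m * Rprof d dw dJ (m / 2) t r := by
  have hX : X ^ (-(d / dw)) ≤ t ^ (-(d / dw)) :=
    rpow_le_rpow_of_nonpos ht htX (neg_nonpos.2 (by positivity))
  have hmX : m / 2 * X ≤ exp (m / 2 * X) := by linarith [add_one_le_exp (m / 2 * X)]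
  have hdecay : t * exp (m * t - 2 * m * X) ≤ 2 / m * exp (-(m / 2 * X)) :=
    calc t * exp (m * t - 2 * m * X) ≤ X * exp (-(m * X)) :=
          mul_le_mul htX (exp_le_exp.2 (by nlinarith)) (exp_pos _).le (ht.le.trans htX)
      _ = 2 / m * (m / 2 * X) * exp (-(m / 2 * X)) * exp (-(m / 2 * X)) := by
          rw [mul_assoc _ (exp _), ← exp_add]; field_simp; ring_nf
      _ ≤ 2 / m * exp (m / 2 * X) * exp (-(m / 2 * X)) * exp (-(m / 2 * X)) := by gcongr
      _ = 2 / m * exp (-(m / 2 * X)) := by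
          rw [mul_assoc (2 / m), ← exp_add, add_neg_cancel, exp_zero, mul_one]
  unfold Rprof
  calc X ^ (-(d / dw)) * (t * exp (m * t - 2 * m * X))
      ≤ t ^ (-(d / dw)) * (2 / m * exp (-(m / 2 * X))) := by gcongr
    _ ≤ t ^ (-(d / dw)) * (2 / m * exp (-(m / 2) *
          min (r ^ (dw / dJ)) ((r * t ^ (-(1 / dw))) ^ (dw / (dJ - 1))))) := by
        gcongr
        rw [neg_mul]
        gcongr
        exact (min_le_left _ _).trans hrX
    _ = _ := by ring

lemma exp_mul_setIntegral_le_Rprof {d dw dJ α m c c' A A' B t r T X : ℝ} {η G : ℝ → ℝ}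
    (hm : 0 < m) (hd : 0 ≤ d) (hdw : 0 < dw) (hc : 0 ≤ c) (hA : 0 ≤ A) (hB : 0 ≤ B)
    (hr : 0 < r) (ht : 0 < t) (htX : t ≤ X) (hrX : r ^ (dw / dJ) ≤ X) (hT : 0 < T)
    (hkT : m ^ (1 / α) * T = 2 * m * X) (hG : Measurable G) (hη : Measurable η)
    (hG0 : ∀ s, 0 < s → 0 ≤ G s) (hη0 : ∀ s, 0 < s → 0 ≤ η s)
    (hF : IntegrableOn (fun s => fprof d dw dJ c' s r * exp (-(m ^ (1 / α)) * s) * η s) (Ioi 0))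
    (hGF : ∀ s, 0 < s → s < T → G s ≤ c * fprof d dw dJ c' s r)
    (hGη : ∀ s, T ≤ s → G s * η s ≤ B * X ^ (-(d / dw)) * t)
    (hΦ : Phi d dw dJ α m η c' t r ≤ A * Rprof d dw dJ A' t r) :
    exp (m * t) * ∫ s in Ioi 0, G s * exp (-(m ^ (1 / α)) * s) * η s ≤
      (c * A + 2 * B / (m ^ (1 / α) * m)) * Rprof d dw dJ (min A' (m / 2)) t r := by
  set k := m ^ (1 / α)
  have hk : 0 < k := by positivity
  have hexp : exp (m * t - 2 * m * X) = exp (m * t) * exp (-k * T) := by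
    rw [← exp_add, neg_mul, hkT]; ring_nf
  calc exp (m * t) * ∫ s in Ioi 0, G s * exp (-k * s) * η s
      ≤ exp (m * t) * (c * (∫ s in Ioi 0, fprof d dw dJ c' s r * exp (-k * s) * η s) +
          B * X ^ (-(d / dw)) * t * (exp (-k * T) / k)) := by
        gcongr
        exact setIntegral_mul_exp_mul_le hc hT hk hG hη hG0 hη0 hF
          (fun _ hs => fprof_nonneg hs.le) hGF hGη
    _ = c * Phi d dw dJ α m η c' t r +
          B / k * (X ^ (-(d / dw)) * (t * exp (m * t - 2 * m * X))) := by
        rw [Phi, hexp]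
        ring
    _ ≤ c * (A * Rprof d dw dJ A' t r) + B / k * (2 / m * Rprof d dw dJ (m / 2) t r) := by
        gcongr c * ?_ + _ * ?_
        exact rpow_neg_mul_exp_le_Rprof hm hd hdw ht htX hrX
    _ ≤ c * (A * Rprof d dw dJ (min A' (m / 2)) t r) +
          B / k * (2 / m * Rprof d dw dJ (min A' (m / 2)) t r) := by
        gcongr <;> exact Rprof_anti ht.le hr.le (by simp)
    _ = _ := by ring

theorem stmt12_general (α m K d dw dJ L c1 c2 c3 c4 c6 Cη A1 A2 A3 A4 : ℝ)
    (hα0 : 0 < α) (hm : 0 < m)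
    (hK : K = 2 * m ^ (1 - 1 / α))
    (hd : 0 < d) (hdw : 0 < dw) (hdJ : 1 < dJ) (hL : 1 < L)
    (hc1 : 0 < c1) (hc3 : 0 < c3) (hc4 : 0 < c4) (hc6 : 0 < c6)
    (hCη : 0 < Cη) (hA1 : 0 < A1) (hA2 : 0 < A2) (hA3 : 0 < A3) (hA4 : 0 < A4) :
    ∃ M0 : ℕ, ∃ C3 C4 C5 C6 : ℝ, 0 < C3 ∧ 0 < C4 ∧ 0 < C5 ∧ 0 < C6 ∧
      ∀ M : ℕ, M0 ≤ M →
      ∀ t : ℝ, 1 ≤ t → t < L ^ ((M : ℝ) * dw) →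
      ∀ r : ℝ, 0 < r → r ≤ L ^ (M : ℝ) →
      ∀ η G : ℝ → ℝ, Measurable η → Measurable G →
        (∀ u, 0 < u → 0 ≤ η u) → (∀ s, 0 < s → 0 ≤ G s) →
        (∀ u, 0 < u → η u ≤ Cη * t * u ^ (-1 - α)) →
        (∀ s, 0 < s → c1 * fprof d dw dJ c2 s r ≤ G s) →
        (∀ s, 0 < s → s < K * L ^ ((M : ℝ) * dw) → G s ≤ c3 * fprof d dw dJ c4 s r) →
        (∀ s, K * L ^ ((M : ℝ) * dw) ≤ s → G s ≤ c6 * L ^ (-((M : ℝ) * d))) →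
        (A1 * Rprof d dw dJ A2 t r ≤ Phi d dw dJ α m η c2 t r) →
        (Phi d dw dJ α m η c4 t r ≤ A3 * Rprof d dw dJ A4 t r) →
        C3 * Rprof d dw dJ C4 t r ≤
            Real.exp (m * t) *
              (∫ s in Ioi (0 : ℝ), G s * Real.exp (-(m ^ (1 / α)) * s) * η s) ∧
          Real.exp (m * t) *
              (∫ s in Ioi (0 : ℝ), G s * Real.exp (-(m ^ (1 / α)) * s) * η s) ≤
            C5 * Rprof d dw dJ C6 t r := by
  have hK0 : 0 < K := hK ▸ by positivity
  -- `M₀ = 0` works since the tail starts at `K L^{M d_w} ≥ K`, where `s^{-1-α} ≤ K^{-1-α}`.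
  refine ⟨0, c1 * A1, A2, c3 * A3 + 2 * (c6 * Cη * K ^ (-1 - α)) / (m ^ (1 / α) * m),
    min A4 (m / 2), by positivity, hA2, by positivity, lt_min hA4 (by positivity), ?_⟩
  intro M _ t ht1 htX r hr hrL η G hη hG hη0 hG0 hηC hGl hGu hGtail hΦl hΦu
  set X := L ^ ((M : ℝ) * dw)
  have ht : 0 < t := one_pos.trans_le ht1
  have hKX : K ≤ K * X := le_mul_of_one_le_right hK0.le (one_le_rpow hL.le (by positivity))
  have hrX : r ^ (dw / dJ) ≤ X := calc
    r ^ (dw / dJ) ≤ (L ^ (M : ℝ)) ^ (dw / dJ) := by gcongr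
    _ = L ^ ((M : ℝ) * (dw / dJ)) := by rw [← rpow_mul (by positivity)]
    _ ≤ X := rpow_le_rpow_of_exponent_le hL.le (by gcongr; exact div_le_self hdw.le hdJ.le)
  have hkT : m ^ (1 / α) * (K * X) = 2 * m * X := by
    have hmm : m ^ (1 / α) * m ^ (1 - 1 / α) = m := by
      rw [← rpow_add hm, add_sub_cancel, rpow_one]
    rw [hK]
    linear_combination 2 * X * hmm
  have hF4 := integrableOn_fprof_mul_exp_mul (q := -1 - α) (k := m ^ (1 / α)) hdw hdJ hc4 hr
    (lt_trans (by linarith only [hα0]) (div_pos hd hdw)) (by positivity) hη hη0 hηC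
  have hGη (s : ℝ) (hsX : K * X ≤ s) :
      G s * η s ≤ c6 * Cη * K ^ (-1 - α) * X ^ (-(d / dw)) * t := by
    have hs : 0 < s := (mul_pos hK0 (by positivity)).trans_le hsX
    have hsK := rpow_le_rpow_of_nonpos hK0 (hKX.trans hsX) (by linarith only [hα0] : -1 - α ≤ 0)
    have hLX : L ^ (-((M : ℝ) * d)) = X ^ (-(d / dw)) := by
      rw [← rpow_mul (by positivity)]; congr 1; field_simp
    calc G s * η s ≤ c6 * L ^ (-((M : ℝ) * d)) * (Cη * t * K ^ (-1 - α)) :=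
          mul_le_mul (hGtail s hsX) ((hηC s hs).trans (by gcongr)) (hη0 s hs) (by positivity)
      _ = _ := by rw [hLX]; ring
  constructor
  · calc c1 * A1 * Rprof d dw dJ A2 t r ≤ c1 * Phi d dw dJ α m η c2 t r := by
          rw [mul_assoc]; gcongr
      _ ≤ _ := mul_Phi_le_of_mul_fprof_le hc1.le hη0
          (integrableOn_mul_exp_mul_of_le (by positivity) hG hη hG0 hη0 hF4 hGu hGη) hGl
  · exact exp_mul_setIntegral_le_Rprof hm hd.le hdw hc3.le hA3.le (by positivity) hr ht htX.le
      hrX (mul_pos hK0 (by positivity)) hkT hG hη hG0 hη0 hF4 hGu hGη hΦu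

/-- regime `1 ≤ t < L^{M d_w}` of the estimates following Theorem 4.1:
the reflected relativistic kernel satisfies the same two-sided bound
`R(t,r;·)` as the free relativistic kernel, with constants independent of `M`,
for all `M` larger than some `M₀`. -/
theorem stmt12 (α m K d dw dJ L c1 c2 c3 c4 c6 Cη A1 A2 A3 A4 : ℝ)
    (hα0 : 0 < α) (hα1 : α < 1) (hm : 0 < m)
    (hK : K = 2 * m ^ (1 - 1 / α))
    (hd : 0 < d) (hdw : 0 < dw) (hdJ : 1 < dJ) (hL : 1 < L)
    (hc1 : 0 < c1) (hc2 : 0 < c2) (hc3 : 0 < c3) (hc4 : 0 < c4) (hc6 : 0 < c6)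
    (hCη : 0 < Cη) (hA1 : 0 < A1) (hA2 : 0 < A2) (hA3 : 0 < A3) (hA4 : 0 < A4) :
    ∃ M0 : ℕ, ∃ C3 C4 C5 C6 : ℝ, 0 < C3 ∧ 0 < C4 ∧ 0 < C5 ∧ 0 < C6 ∧
      ∀ M : ℕ, M0 ≤ M →
      ∀ t : ℝ, 1 ≤ t → t < L ^ ((M : ℝ) * dw) →
      ∀ r : ℝ, 0 < r → r ≤ L ^ (M : ℝ) →
      ∀ η G : ℝ → ℝ, Measurable η → Measurable G →
        (∀ u, 0 < u → 0 ≤ η u) → (∀ s, 0 < s → 0 ≤ G s) →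
        (∀ u, 0 < u → η u ≤ Cη * t * u ^ (-1 - α)) →
        (∀ s, 0 < s → c1 * fprof d dw dJ c2 s r ≤ G s) →
        (∀ s, 0 < s → s < K * L ^ ((M : ℝ) * dw) → G s ≤ c3 * fprof d dw dJ c4 s r) →
        (∀ s, K * L ^ ((M : ℝ) * dw) ≤ s → G s ≤ c6 * L ^ (-((M : ℝ) * d))) →
        (A1 * Rprof d dw dJ A2 t r ≤ Phi d dw dJ α m η c2 t r) →
        (Phi d dw dJ α m η c4 t r ≤ A3 * Rprof d dw dJ A4 t r) →
        C3 * Rprof d dw dJ C4 t r ≤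
            Real.exp (m * t) *
              (∫ s in Ioi (0 : ℝ), G s * Real.exp (-(m ^ (1 / α)) * s) * η s) ∧
          Real.exp (m * t) *
              (∫ s in Ioi (0 : ℝ), G s * Real.exp (-(m ^ (1 / α)) * s) * η s) ≤
            C5 * Rprof d dw dJ C6 t r :=
  stmt12_general α m K d dw dJ L c1 c2 c3 c4 c6 Cη A1 A2 A3 A4 hα0 hm hK hd hdw hdJ hL hc1 hc3 hc4
    hc6 hCη hA1 hA2 hA3 hA4
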